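/- The map H_III^B(α,β) is an involution: if (u,v) = H_III^B(α,β)(x,y) with αxy+1 ≠ 0 and βxy+1 ≠ 0, then uv = xy and H_III^B(α,β)(u,v) = (x,y). -/

import Mathlib

/-!
The map depends on `(x, y)` through the swap `(x, y) ↦ (y, x)` and the factor
`ρ(xy) = (β xy + 1)/(α xy + 1)` alone: `H(x, y) = (y ρ(xy), x ρ(xy)⁻¹)`. The image therefore has
the same product `xy`, so applying `H` again multiplies by the same `ρ(xy)` and `ρ(xy)⁻¹`,
which cancel.
-/

/-- the map H_III^B -/
def HIIIBMap {K : Type*} [Field K] (a b : K) : K × K → K × K :=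
  fun p => (p.2 * ((b*p.1*p.2 + 1)/(a*p.1*p.2 + 1)), p.1 * ((a*p.1*p.2 + 1)/(b*p.1*p.2 + 1)))

section HIIIB

variable {K : Type*} [Field K] (a b : K)

def HIIIBFactor (t : K) : K := (b * t + 1) / (a * t + 1)

theorem HIIIBMap_mk (x y : K) :
    HIIIBMap a b (x, y) = (y * HIIIBFactor a b (x * y), x * (HIIIBFactor a b (x * y))⁻¹) := by
  simp only [HIIIBMap, HIIIBFactor, inv_div, mul_assoc]

theorem HIIIBFactor_ne_zero {t : K} (ha : a * t + 1 ≠ 0) (hb : b * t + 1 ≠ 0) :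
    HIIIBFactor a b t ≠ 0 :=
  div_ne_zero hb ha

end HIIIB

theorem HIIIB_involution {K : Type*} [Field K] (a b x y : K)
    (ha : a*x*y + 1 ≠ 0) (hb : b*x*y + 1 ≠ 0) :
    (HIIIBMap a b (x, y)).1 * (HIIIBMap a b (x, y)).2 = x * y ∧
      HIIIBMap a b (HIIIBMap a b (x, y)) = (x, y) := by
  have hρ : HIIIBFactor a b (x * y) ≠ 0 :=
    HIIIBFactor_ne_zero a b (by rwa [← mul_assoc]) (by rwa [← mul_assoc])
  have hprod : y * HIIIBFactor a b (x * y) * (x * (HIIIBFactor a b (x * y))⁻¹) = x * y := by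
    rw [mul_mul_mul_comm, mul_inv_cancel₀ hρ, mul_one, mul_comm]
  refine ⟨by rw [HIIIBMap_mk, hprod], ?_⟩
  rw [HIIIBMap_mk, HIIIBMap_mk, hprod]
  simp only [mul_assoc, inv_mul_cancel₀ hρ, mul_inv_cancel₀ hρ, mul_one]
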